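/- arXiv:2207.11591 — 3 statements merged into one kernel-verified Lean document; each statement's English description precedes it below -/
import Mathlib

section
/- Let Q be a locally finite poset and g : Q → ℝ a non-decreasing convolvable function. Then the Möbius inversion f = g ∗ μ_Q of g is also convolvable over Q. -/
/-- If `g : Q → ℝ` is non-decreasing and convolvable over the locally finite poset `Q`, then
its Möbius inversion `f = g ∗ μ_Q` is also convolvable over `Q`. -/
theorem mobius_inversion_of_monotone_convolvable (Q : Type*) [PartialOrder Q]
    [LocallyFiniteOrder Q] [DecidableEq Q] (g : Q → ℝ) (hmono : Monotone g)
    (hconv : ∀ q : Q, {r : Q | r ≤ q ∧ g r ≠ 0}.Finite) :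
    ∀ q : Q, {r : Q | r ≤ q ∧
      (∑ᶠ s ∈ Set.Iic r, g s * IncidenceAlgebra.mu ℝ s r) ≠ 0}.Finite := by
  intro q
  apply Set.Finite.subset
    ((hconv q).biUnion (fun s _ => Set.finite_Icc s q))
  rintro r ⟨hrq, hf⟩
  by_contra h
  simp only [Set.mem_iUnion, Set.mem_setOf_eq, Set.mem_Icc, not_exists, not_and] at h
  apply hf
  apply finsum_mem_of_eqOn_zero
  intro s hs
  have hsr : s ≤ r := hs
  have : g s = 0 := by
    by_contra hg
    exact h s ⟨hsr.trans hrq, hg⟩ hsr hrq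
  simp [this]
end

section
/- Let S be a nonempty finite subset of a poset P and m : P → ℤ an S-constructible function with respect to a co-closure c : P → P with image S. Then for all q ∈ P, m(q) = ∑_{p≤q, p∈S} (m|_S ∗ μ_S)(p), where μ_S is the Möbius function of the finite poset S. -/
open scoped Classical

/-- The finite subtype attached to a finset of a poset is a locally finite order. -/
noncomputable instance finsetSubtypeLocallyFinite {P : Type*} [PartialOrder P] (S : Finset P) :
    LocallyFiniteOrder {x // x ∈ S} :=
  Fintype.toLocallyFiniteOrder

lemma mobius_key {P : Type*} [PartialOrder P] (S : Finset P) (m : P → ℤ)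
    (x : {p // p ∈ S}) :
    ∑ p : {x // x ∈ S}, (if p ≤ x then
        ∑ p' : {x // x ∈ S}, (if p' ≤ p then m ↑p' * IncidenceAlgebra.mu ℤ p' p else 0)
      else 0) = m ↑x := by
  classical
  calc
    ∑ p : {x // x ∈ S}, (if p ≤ x then
        ∑ p' : {x // x ∈ S}, (if p' ≤ p then m ↑p' * IncidenceAlgebra.mu ℤ p' p else 0)
      else 0)
      = ∑ p : {x // x ∈ S}, ∑ p' : {x // x ∈ S},
          (if p' ≤ p ∧ p ≤ x then m ↑p' * IncidenceAlgebra.mu ℤ p' p else 0) := by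
        refine Finset.sum_congr rfl fun p _ => ?_
        by_cases h : p ≤ x
        · simp only [h, if_true, and_true]
        · simp [h]
    _ = ∑ p' : {x // x ∈ S}, ∑ p : {x // x ∈ S},
          (if p' ≤ p ∧ p ≤ x then m ↑p' * IncidenceAlgebra.mu ℤ p' p else 0) :=
        Finset.sum_comm
    _ = ∑ p' : {x // x ∈ S}, m ↑p' *
          ∑ p ∈ Finset.Icc p' x, IncidenceAlgebra.mu ℤ p' p := by
        refine Finset.sum_congr rfl fun p' _ => ?_
        rw [Finset.mul_sum]
        have hIcc : Finset.Icc p' x = Finset.univ.filter (fun p => p' ≤ p ∧ p ≤ x) := by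
          ext p; simp [Finset.mem_Icc]
        rw [hIcc, Finset.sum_filter]
    _ = ∑ p' : {x // x ∈ S}, m ↑p' * (if p' = x then 1 else 0) := by
        refine Finset.sum_congr rfl fun p' _ => ?_
        rw [IncidenceAlgebra.sum_Icc_mu_right]
    _ = m ↑x := by
        simp

/-- Let `S` be a nonempty finite subset of a poset `P` and `m : P → ℤ` an `S`-constructible
function with respect to a co-closure `c : P → P` with image `S`.  Then for all `q ∈ P`,
`m(q) = ∑_{p ≤ q, p ∈ S} (m|_S ∗ μ_S)(p)`, where `μ_S` is the Möbius function of `S`. -/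
theorem constructible_mobius_inversion {P : Type*} [PartialOrder P] (S : Finset P)
    (hne : S.Nonempty) (c : P → P) (hmono : Monotone c) (hdefl : ∀ p : P, c p ≤ p)
    (hidem : ∀ p : P, c (c p) = c p) (himg : Set.range c = ↑S)
    (m : P → ℤ) (hm : ∀ p : P, m (c p) = m p) :
    ∀ q : P, m q =
      ∑ p : {x // x ∈ S}, (if (p : P) ≤ q then
        ∑ p' : {x // x ∈ S}, (if p' ≤ p then m ↑p' * IncidenceAlgebra.mu ℤ p' p else 0)
      else 0) := by
  intro q
  have hcqS : c q ∈ S := by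
    have : c q ∈ Set.range c := ⟨q, rfl⟩
    rwa [himg] at this
  have hfix : ∀ p : P, p ∈ S → c p = p := by
    intro p hp
    have : p ∈ Set.range c := by rw [himg]; exact hp
    obtain ⟨r, hr⟩ := this
    rw [← hr, hidem]
  have key := mobius_key S m ⟨c q, hcqS⟩
  rw [← hm q, ← key]
  refine Finset.sum_congr rfl fun p _ => ?_
  congr 1
  · simp only [eq_iff_iff, Subtype.mk_le_mk]
    show ((p : P) ≤ c q) ↔ ((p : P) ≤ q)
    constructor
    · intro h
      exact h.trans (hdefl q)
    · intro h
      have := hmono h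
      rwa [hfix _ p.2] at this
end

section
/- Let P be a connected poset and M a functor from P to finite-dimensional vector spaces that decomposes as a direct sum of indecomposables M ≅ ⊕_{a∈A} M_a. Then the rank of the canonical limit-to-colimit map of M equals the number of indices a ∈ A such that M_a is isomorphic to the constant interval module k_P. -/
open scoped Classical

variable (k : Type) (P : Type) [Field k] [PartialOrder P]

/-- A pointwise (not necessarily finite-dimensional) persistence module over the poset `P`. -/
structure PersMod where
  V : P → Type
  [acg : ∀ p, AddCommGroup (V p)]
  [mod : ∀ p, Module k (V p)]
  φ : ∀ p q : P, p ≤ q → (V p →ₗ[k] V q)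
  φ_self : ∀ p : P, φ p p le_rfl = LinearMap.id
  φ_comp : ∀ (p q r : P) (hpq : p ≤ q) (hqr : q ≤ r),
    (φ q r hqr).comp (φ p q hpq) = φ p r (hpq.trans hqr)

attribute [instance] PersMod.acg PersMod.mod

variable {k P}

namespace PersMod

lemma φ_self_apply (M : PersMod k P) (p : P) (v : M.V p) : M.φ p p le_rfl v = v := by
  rw [M.φ_self]; rfl

lemma φ_comp_apply (M : PersMod k P) (p q r : P) (hpq : p ≤ q) (hqr : q ≤ r) (v : M.V p) :
    M.φ q r hqr (M.φ p q hpq v) = M.φ p r (hpq.trans hqr) v := by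
  rw [← M.φ_comp p q r hpq hqr]; rfl

/-- The submodule of sections of `M` over a subset `I ⊆ P`. -/
def sections (M : PersMod k P) (I : Set P) : Submodule k (∀ p : I, M.V p) where
  carrier := {ℓ | ∀ (p q : I) (h : (p : P) ≤ (q : P)), M.φ p q h (ℓ p) = ℓ q}
  add_mem' := by
    intro a b ha hb p q h
    simp only [Pi.add_apply, map_add, ha p q h, hb p q h]
  zero_mem' := by
    intro p q h
    simp only [Pi.zero_apply, map_zero]
  smul_mem' := by
    intro c a ha p q h
    simp only [Pi.smul_apply, map_smul, ha p q h]

/-- The relations submodule used to present the colimit of `M` over `I`. -/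
noncomputable def colimRel (M : PersMod k P) (I : Set P) :
    Submodule k (Π₀ p : I, M.V p) :=
  Submodule.span k {x | ∃ (p q : I) (h : (p : P) ≤ (q : P)) (v : M.V p),
    x = DFinsupp.lsingle (R := k) p v - DFinsupp.lsingle (R := k) q (M.φ p q h v)}

/-- The canonical limit-to-colimit map of `M` over `I`, based at `p0 ∈ I`. -/
noncomputable def limToColim (M : PersMod k P) (I : Set P) (p0 : P) (hp : p0 ∈ I) :
    (M.sections I) →ₗ[k] (Π₀ p : I, M.V p) ⧸ M.colimRel I :=
  (M.colimRel I).mkQ ∘ₗ (DFinsupp.lsingle (R := k) (⟨p0, hp⟩ : I)) ∘ₗ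
    (LinearMap.proj (⟨p0, hp⟩ : I)) ∘ₗ (M.sections I).subtype

/-- The generalized rank of `M` over `I`, based at `p0 ∈ I`. -/
noncomputable def rkAt (M : PersMod k P) (I : Set P) (p0 : P) (hp : p0 ∈ I) : ℕ :=
  Module.finrank k (LinearMap.range (M.limToColim I p0 hp))

/-- The generalized rank of `M` over `I` (with a choice of basepoint; for a connected
subposet `I` this is independent of the basepoint). -/
noncomputable def rk (M : PersMod k P) (I : Set P) : ℕ :=
  if h : I.Nonempty then M.rkAt I h.choose h.choose_spec else 0

end PersMod

/-- One step of a zigzag inside `I`. -/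
def zigStep (I : Set P) (a b : P) : Prop := a ∈ I ∧ b ∈ I ∧ (a ≤ b ∨ b ≤ a)

/-- `I` is a connected subposet of `P`. -/
def IsConnectedPoset (I : Set P) : Prop :=
  I.Nonempty ∧ ∀ a ∈ I, ∀ b ∈ I, Relation.ReflTransGen (zigStep I) a b

/-- `I` is a convex subset of `P`. -/
def IsConvexPoset (I : Set P) : Prop :=
  ∀ ⦃a b c : P⦄, a ∈ I → c ∈ I → a ≤ b → b ≤ c → b ∈ I

/-- `I` is an interval of `P`: nonempty, convex and connected. -/
def IsIntervalPoset (I : Set P) : Prop := IsConvexPoset I ∧ IsConnectedPoset I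

namespace PersMod

/-- Isomorphism of persistence modules. -/
structure Iso (M N : PersMod k P) where
  e : ∀ p : P, M.V p ≃ₗ[k] N.V p
  comm : ∀ (p q : P) (h : p ≤ q) (v : M.V p), e q (M.φ p q h v) = N.φ p q h (e p v)

/-- Binary direct sum of persistence modules. -/
def dSum (M N : PersMod k P) : PersMod k P where
  V p := M.V p × N.V p
  φ p q h := (M.φ p q h).prodMap (N.φ p q h)
  φ_self p := by
    show (M.φ p p le_rfl).prodMap (N.φ p p le_rfl) = LinearMap.id
    apply LinearMap.ext
    rintro ⟨a, b⟩
    simp [M.φ_self_apply, N.φ_self_apply]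
  φ_comp p q r hpq hqr := by
    show ((M.φ q r hqr).prodMap (N.φ q r hqr)).comp ((M.φ p q hpq).prodMap (N.φ p q hpq)) = _
    apply LinearMap.ext
    rintro ⟨a, b⟩
    simp [M.φ_comp_apply, N.φ_comp_apply]

/-- Direct sum of an arbitrary family of persistence modules. -/
noncomputable def famSum {ι : Type} (Mf : ι → PersMod k P) : PersMod k P where
  V p := Π₀ i, (Mf i).V p
  φ p q h := DFinsupp.mapRange.linearMap (fun i => (Mf i).φ p q h)
  φ_self p := by
    show DFinsupp.mapRange.linearMap (fun i => (Mf i).φ p p le_rfl) = LinearMap.id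
    have : (fun i => (Mf i).φ p p le_rfl) = fun i => (LinearMap.id : (Mf i).V p →ₗ[k] (Mf i).V p) := by
      funext i; exact (Mf i).φ_self p
    rw [this, DFinsupp.mapRange.linearMap_id]
  φ_comp p q r hpq hqr := by
    show (DFinsupp.mapRange.linearMap (fun i => (Mf i).φ q r hqr)).comp
        (DFinsupp.mapRange.linearMap (fun i => (Mf i).φ p q hpq)) =
      DFinsupp.mapRange.linearMap (fun i => (Mf i).φ p r (hpq.trans hqr))
    rw [← DFinsupp.mapRange.linearMap_comp]
    congr 1
    funext i
    exact (Mf i).φ_comp p q r hpq hqr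

/-- `M` is a trivial (zero) persistence module. -/
def IsTrivial (M : PersMod k P) : Prop := ∀ p : P, Subsingleton (M.V p)

/-- `M` is indecomposable. -/
def Indecomposable (M : PersMod k P) : Prop :=
  ¬ M.IsTrivial ∧
    ∀ N₁ N₂ : PersMod k P, Nonempty (Iso M (dSum N₁ N₂)) → N₁.IsTrivial ∨ N₂.IsTrivial

end PersMod

/-- The fibers of the interval module. -/
noncomputable def kSub (I : Set P) (p : P) : Submodule k k := if p ∈ I then ⊤ else ⊥

/-- The interval module `k_I` supported on a convex subset `I`. -/
noncomputable def kMod (I : Set P) (hI : IsConvexPoset I) : PersMod k P where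
  V p := ↥(kSub (k := k) I p)
  φ p q _h := LinearMap.codRestrict _
    ((if p ∈ I ∧ q ∈ I then (1 : k) else 0) • (Submodule.subtype (kSub (k := k) I p)))
    (by
      intro x
      by_cases hq : q ∈ I
      · simp [kSub, hq]
      · have hpq : ¬ (p ∈ I ∧ q ∈ I) := fun h => hq h.2
        rw [if_neg hpq, zero_smul, LinearMap.zero_apply]
        exact Submodule.zero_mem _)
  φ_self p := by
    apply LinearMap.ext
    intro x
    apply Subtype.ext
    by_cases hp : p ∈ I
    · simp [hp]
    · have hx : (x : k) = 0 := by
        have := x.2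
        simp only [kSub, if_neg hp, Submodule.mem_bot] at this
        exact this
      simp [hp, hx]
  φ_comp p q r hpq hqr := by
    apply LinearMap.ext
    intro x
    apply Subtype.ext
    by_cases hp : p ∈ I
    · by_cases hr : r ∈ I
      · have hq : q ∈ I := hI hp hr hpq hqr
        simp [hp, hq, hr]
      · have h1 : ¬ (q ∈ I ∧ r ∈ I) := fun h => hr h.2
        have h2 : ¬ (p ∈ I ∧ r ∈ I) := fun h => hr h.2
        simp [h1, h2]
    · have hx : (x : k) = 0 := by
        have := x.2
        simp only [kSub, if_neg hp, Submodule.mem_bot] at this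
        exact this
      have h1 : ¬ (p ∈ I ∧ q ∈ I) := fun h => hp h.1
      have h2 : ¬ (p ∈ I ∧ r ∈ I) := fun h => hp h.1
      by_cases h3 : q ∈ I ∧ r ∈ I <;> simp [h1, h2, h3, hx]

namespace PersMod

variable {M N L : PersMod k P}

/-- A morphism of persistence modules. -/
structure Hom (M N : PersMod k P) where
  f : ∀ p : P, M.V p →ₗ[k] N.V p
  comm : ∀ (p q : P) (h : p ≤ q) (v : M.V p), f q (M.φ p q h v) = N.φ p q h (f p v)

def Hom.comp (g : Hom N L) (f : Hom M N) : Hom M L where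
  f p := (g.f p).comp (f.f p)
  comm p q h v := by simp [LinearMap.comp_apply, f.comm, g.comm]

/-- The induced map on sections. -/
def secMap (f : Hom M N) (I : Set P) : (M.sections I) →ₗ[k] (N.sections I) :=
  LinearMap.codRestrict _
    ((LinearMap.pi (fun p : I => (f.f p).comp (LinearMap.proj p))).comp (M.sections I).subtype)
    (by
      rintro ⟨ℓ, hℓ⟩ p q h
      simp only [LinearMap.comp_apply, Submodule.subtype_apply, LinearMap.pi_apply,
        LinearMap.proj_apply]
      rw [← f.comm, hℓ p q h])

lemma secMap_apply (f : Hom M N) (I : Set P) (ℓ : M.sections I) (p : I) :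
    ((secMap f I ℓ : N.sections I) : ∀ p : I, N.V p) p = f.f p ((ℓ : ∀ p : I, M.V p) p) := rfl

noncomputable def cMapAux (f : Hom M N) (I : Set P) :
    (Π₀ p : I, M.V p) →ₗ[k] (Π₀ p : I, N.V p) :=
  DFinsupp.mapRange.linearMap (fun p : I => f.f p)

lemma cMapAux_single (f : Hom M N) (I : Set P) (p : I) (v : M.V p) :
    cMapAux f I (DFinsupp.lsingle (R := k) p v) = DFinsupp.lsingle (R := k) p (f.f p v) := by
  simp [cMapAux, DFinsupp.mapRange.linearMap, DFinsupp.lsingle_apply, DFinsupp.mapRange_single]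
  exact DFinsupp.mapRange_single (hf := fun i => map_zero _)

lemma cMapAux_rel (f : Hom M N) (I : Set P) :
    M.colimRel I ≤ Submodule.comap (cMapAux f I) (N.colimRel I) := by
  rw [colimRel, Submodule.span_le]
  rintro x ⟨p, q, h, v, rfl⟩
  simp only [SetLike.mem_coe, Submodule.mem_comap, map_sub, cMapAux_single]
  have : f.f q (M.φ p q h v) = N.φ p q h (f.f p v) := f.comm p q h v
  rw [this]
  exact Submodule.subset_span ⟨p, q, h, f.f p v, rfl⟩

/-- The induced map on colimits. -/
noncomputable def colimMap (f : Hom M N) (I : Set P) :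
    ((Π₀ p : I, M.V p) ⧸ M.colimRel I) →ₗ[k] ((Π₀ p : I, N.V p) ⧸ N.colimRel I) :=
  Submodule.mapQ _ _ (cMapAux f I) (cMapAux_rel f I)

lemma colimMap_mk (f : Hom M N) (I : Set P) (x : Π₀ p : I, M.V p) :
    colimMap f I (Submodule.Quotient.mk x) = Submodule.Quotient.mk (cMapAux f I x) :=
  Submodule.mapQ_apply _ _ _ x

lemma colimMap_limToColim (f : Hom M N) (I : Set P) (p0 : P) (hp : p0 ∈ I) (ℓ : M.sections I) :
    colimMap f I (M.limToColim I p0 hp ℓ) = N.limToColim I p0 hp (secMap f I ℓ) := by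
  show colimMap f I (Submodule.Quotient.mk _) = Submodule.Quotient.mk _
  rw [colimMap_mk]
  simp only [LinearMap.comp_apply]
  rw [cMapAux_single]
  rfl

end PersMod
namespace PersMod

variable {M N : PersMod k P}

def Iso.symm (e : Iso M N) : Iso N M where
  e p := (e.e p).symm
  comm p q h v := by
    apply (e.e q).injective
    rw [e.comm, LinearEquiv.apply_symm_apply, LinearEquiv.apply_symm_apply]

def Iso.toHom (e : Iso M N) : Hom M N := ⟨fun p => (e.e p).toLinearMap, e.comm⟩

lemma cMapAux_symm_aux (e : Iso M N) (I : Set P) (x : Π₀ p : I, M.V p) :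
    cMapAux e.symm.toHom I (cMapAux e.toHom I x) = x := by
  ext p
  simp [cMapAux, Iso.toHom, Iso.symm]

lemma cMapAux_symm_aux' (e : Iso M N) (I : Set P) (x : Π₀ p : I, N.V p) :
    cMapAux e.toHom I (cMapAux e.symm.toHom I x) = x := by
  ext p
  simp [cMapAux, Iso.toHom, Iso.symm]

lemma colimMap_iso_bij (e : Iso M N) (I : Set P) :
    Function.Bijective (colimMap e.toHom I) := by
  constructor
  · intro x y hxy
    obtain ⟨x, rfl⟩ := Submodule.Quotient.mk_surjective _ x
    obtain ⟨y, rfl⟩ := Submodule.Quotient.mk_surjective _ y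
    have := congrArg (colimMap e.symm.toHom I) hxy
    rwa [colimMap_mk, colimMap_mk, colimMap_mk, colimMap_mk, cMapAux_symm_aux,
      cMapAux_symm_aux] at this
  · intro y
    obtain ⟨y, rfl⟩ := Submodule.Quotient.mk_surjective _ y
    exact ⟨Submodule.Quotient.mk (cMapAux e.symm.toHom I y), by
      rw [colimMap_mk, cMapAux_symm_aux']⟩

lemma secMap_iso_surj (e : Iso M N) (I : Set P) :
    Function.Surjective (secMap e.toHom I) := by
  intro ℓ
  refine ⟨secMap e.symm.toHom I ℓ, ?_⟩
  apply Subtype.ext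
  funext p
  rw [secMap_apply, secMap_apply]
  simp [Iso.toHom, Iso.symm]

lemma range_limToColim_iso (e : Iso M N) (I : Set P) (p0 : P) (hp : p0 ∈ I) :
    LinearMap.range (N.limToColim I p0 hp) =
      Submodule.map (colimMap e.toHom I) (LinearMap.range (M.limToColim I p0 hp)) := by
  ext y
  simp only [LinearMap.mem_range, Submodule.mem_map]
  constructor
  · rintro ⟨ℓ, rfl⟩
    obtain ⟨ℓ', rfl⟩ := secMap_iso_surj e I ℓ
    exact ⟨M.limToColim I p0 hp ℓ', ⟨ℓ', rfl⟩, colimMap_limToColim _ _ _ _ _⟩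
  · rintro ⟨x, ⟨ℓ, rfl⟩, rfl⟩
    exact ⟨secMap e.toHom I ℓ, (colimMap_limToColim _ _ _ _ _).symm⟩

lemma rkAt_eq_of_iso (e : Iso M N) (I : Set P) (p0 : P) (hp : p0 ∈ I) :
    M.rkAt I p0 hp = N.rkAt I p0 hp := by
  rw [rkAt, rkAt, range_limToColim_iso e I p0 hp]
  let ce := LinearEquiv.ofBijective (colimMap e.toHom I) (colimMap_iso_bij e I)
  have : Submodule.map (colimMap e.toHom I) (LinearMap.range (M.limToColim I p0 hp)) =
      Submodule.map (ce : _ →ₗ[k] _) (LinearMap.range (M.limToColim I p0 hp)) := rfl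
  rw [this, LinearEquiv.finrank_map_eq]

end PersMod
namespace PersMod

variable {M N : PersMod k P}

lemma mk_lsingle_step (M : PersMod k P) (I : Set P) (ℓ : ∀ p : I, M.V p)
    (hℓ : ℓ ∈ M.sections I) (p q : I) (h : (p : P) ≤ (q : P)) :
    (Submodule.Quotient.mk (DFinsupp.lsingle (R := k) p (ℓ p)) :
        (Π₀ p : I, M.V p) ⧸ M.colimRel I) =
      Submodule.Quotient.mk (DFinsupp.lsingle (R := k) q (ℓ q)) := by
  rw [Submodule.Quotient.eq]
  have : ℓ q = M.φ p q h (ℓ p) := (hℓ p q h).symm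
  rw [this]
  exact Submodule.subset_span ⟨p, q, h, ℓ p, rfl⟩

lemma mk_lsingle_zigzag (M : PersMod k P) (I : Set P) (ℓ : ∀ p : I, M.V p)
    (hℓ : ℓ ∈ M.sections I) {a b : P} (hz : Relation.ReflTransGen (zigStep I) a b)
    (ha : a ∈ I) (hb : b ∈ I) :
    (Submodule.Quotient.mk (DFinsupp.lsingle (R := k) (⟨a, ha⟩ : I) (ℓ ⟨a, ha⟩)) :
        (Π₀ p : I, M.V p) ⧸ M.colimRel I) =
      Submodule.Quotient.mk (DFinsupp.lsingle (R := k) (⟨b, hb⟩ : I) (ℓ ⟨b, hb⟩)) := by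
  revert hb
  induction hz with
  | refl => intro hb; rfl
  | @tail c d _hz step ih =>
    intro hd
    obtain ⟨hc, hd', hcd | hdc⟩ := step
    · exact (ih hc).trans (mk_lsingle_step M I ℓ hℓ ⟨c, hc⟩ ⟨d, hd⟩ hcd)
    · exact (ih hc).trans (mk_lsingle_step M I ℓ hℓ ⟨d, hd⟩ ⟨c, hc⟩ hdc).symm

section KMod

set_option linter.unusedSectionVars false

/-- Convexity of `univ`. -/
lemma univ_convex : IsConvexPoset (Set.univ : Set P) := fun _ _ _ _ _ _ _ => trivial

lemma mem_kSub_univ (p : P) (c : k) : c ∈ kSub (k := k) (Set.univ : Set P) p := by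
  simp [kSub]

/-- The underlying scalar of an element of the interval module. -/
def kval {p : P} (x : (kMod (k := k) (Set.univ : Set P) univ_convex).V p) : k :=
  Subtype.val x

lemma kval_inj {p : P} (x y : (kMod (k := k) (Set.univ : Set P) univ_convex).V p)
    (h : kval x = kval y) : x = y := Subtype.ext h

lemma kMod_univ_φ_coe (p q : P) (h : p ≤ q)
    (x : (kMod (k := k) (Set.univ : Set P) univ_convex).V p) :
    kval ((kMod (k := k) (Set.univ : Set P) univ_convex).φ p q h x) = kval x := by
  show Subtype.val _ = _
  simp [kMod, kval, LinearMap.codRestrict_apply, Set.mem_univ]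
  rfl

/-- The constant section of the interval module over `univ`. -/
def kConstSec (c : k) :
    ((kMod (k := k) (Set.univ : Set P) univ_convex).sections Set.univ) :=
  ⟨fun p => ⟨c, mem_kSub_univ p c⟩, by
    intro p q h
    apply Subtype.ext
    exact kMod_univ_φ_coe p q h _⟩

lemma kval_kConstSec (c : k) (p : (Set.univ : Set P)) :
    kval ((kConstSec c).1 p) = c := rfl

lemma kMod_sec_const (hconn : IsConnectedPoset (Set.univ : Set P))
    (ℓ : ((kMod (k := k) (Set.univ : Set P) univ_convex).sections Set.univ))
    (p q : (Set.univ : Set P)) :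
    kval (ℓ.1 p) = kval (ℓ.1 q) := by
  obtain ⟨p, hp⟩ := p
  obtain ⟨q, hq⟩ := q
  have hz := hconn.2 p trivial q trivial
  revert hq
  induction hz with
  | refl => intro hq; rfl
  | @tail c d _hz step ih =>
    intro hd
    obtain ⟨hc, hd2, hcd | hdc⟩ := step
    · have h2 := ℓ.2 ⟨c, hc⟩ ⟨d, hd⟩ hcd
      have hcoe := congrArg kval h2
      rw [kMod_univ_φ_coe] at hcoe
      exact (ih hc).trans hcoe
    · have h2 := ℓ.2 ⟨d, hd⟩ ⟨c, hc⟩ hdc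
      have hcoe := congrArg kval h2
      rw [kMod_univ_φ_coe] at hcoe
      exact (ih hc).trans hcoe.symm

lemma kMod_sec_eq_smul (hconn : IsConnectedPoset (Set.univ : Set P))
    (ℓ : ((kMod (k := k) (Set.univ : Set P) univ_convex).sections Set.univ))
    (p0 : P) :
    ℓ = kval (ℓ.1 ⟨p0, Set.mem_univ p0⟩) • kConstSec 1 := by
  apply Subtype.ext
  funext p
  apply kval_inj
  have h1 : kval ((kval (ℓ.1 ⟨p0, Set.mem_univ p0⟩) • kConstSec (P := P) 1).1 p) =
      kval (ℓ.1 ⟨p0, Set.mem_univ p0⟩) * 1 := rfl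
  rw [h1, mul_one]
  exact kMod_sec_const hconn ℓ p ⟨p0, Set.mem_univ p0⟩

/-- The sum functional on the colimit presentation of the interval module. -/
noncomputable def kSumFun :
    (Π₀ p : (Set.univ : Set P),
        (kMod (k := k) (Set.univ : Set P) univ_convex).V p) →ₗ[k] k :=
  DFinsupp.lsum ℕ (fun p : (Set.univ : Set P) => (kSub (k := k) Set.univ (p : P)).subtype)

lemma kSumFun_single (p : (Set.univ : Set P))
    (v : (kMod (k := k) (Set.univ : Set P) univ_convex).V p) :
    kSumFun (k := k) (P := P) (DFinsupp.lsingle (R := k) p v) = kval v := by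
  simp only [kSumFun, DFinsupp.lsingle_apply, DFinsupp.lsum_single]
  exact DFinsupp.lsum_single (M := fun p : (Set.univ : Set P) => ↥(kSub (k := k) Set.univ (p : P))) ℕ _ p v

lemma kSumFun_rel :
    (kMod (k := k) (Set.univ : Set P) univ_convex).colimRel Set.univ ≤
      LinearMap.ker (kSumFun (k := k) (P := P)) := by
  rw [colimRel, Submodule.span_le]
  rintro x ⟨p, q, h, v, rfl⟩
  simp only [SetLike.mem_coe, LinearMap.mem_ker, map_sub, kSumFun_single]
  rw [kMod_univ_φ_coe, sub_self]

lemma kMod_psi_one_ne (p0 : P) :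
    (kMod (k := k) (Set.univ : Set P) univ_convex).limToColim Set.univ p0
        (Set.mem_univ p0) (kConstSec 1) ≠ 0 := by
  intro hzero
  simp only [limToColim, LinearMap.comp_apply, Submodule.mkQ_apply,
    Submodule.Quotient.mk_eq_zero] at hzero
  have h2 := kSumFun_rel hzero
  rw [LinearMap.mem_ker, kSumFun_single] at h2
  exact one_ne_zero h2

end KMod

end PersMod
namespace PersMod

set_option linter.unusedSectionVars false

section Core

variable (M : PersMod k P)

/-- The kernel submodule persistence module. -/
noncomputable def kerMod (g0 : ∀ p : P, M.V p →ₗ[k] k)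
    (hg0 : ∀ (p q : P) (h : p ≤ q) (x : M.V p), g0 q (M.φ p q h x) = g0 p x) :
    PersMod k P where
  V p := ↥(LinearMap.ker (g0 p))
  φ p q h := (M.φ p q h).restrict (p := LinearMap.ker (g0 p)) (q := LinearMap.ker (g0 q))
    (fun x hx => by
      rw [LinearMap.mem_ker] at hx ⊢
      rw [hg0 p q h x]
      exact hx)
  φ_self p := by
    apply LinearMap.ext
    intro x
    apply Subtype.ext
    simp only [LinearMap.restrict_apply, LinearMap.id_coe, id_eq]
    exact M.φ_self_apply p x.1
  φ_comp p q r hpq hqr := by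
    apply LinearMap.ext
    intro x
    apply Subtype.ext
    simp only [LinearMap.comp_apply, LinearMap.restrict_apply]
    exact M.φ_comp_apply p q r hpq hqr x.1

lemma iso_kMod_of_psi_ne_zero (hconn : IsConnectedPoset (Set.univ : Set P))
    (hind : M.Indecomposable) (p0 : P)
    (ℓ : M.sections Set.univ)
    (hne : M.limToColim Set.univ p0 (Set.mem_univ p0) ℓ ≠ 0) :
    Nonempty (M.Iso (kMod (k := k) (Set.univ : Set P) univ_convex)) := by
  classical
  set v : (Π₀ p : (Set.univ : Set P), M.V p) ⧸ M.colimRel (Set.univ : Set P) := M.limToColim (Set.univ : Set P) p0 (Set.mem_univ p0) ℓ with hv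
  -- a functional ξ with ξ v = 1
  have hnev : v ≠ 0 := hne
  obtain ⟨ξ, hξ⟩ := LinearMap.exists_leftInverse_of_injective
    (LinearMap.toSpanSingleton k _ v) (LinearMap.ker_toSpanSingleton k hnev)
  have hξv : ξ v = 1 := by
    have h1 := LinearMap.congr_fun hξ 1
    simpa [LinearMap.toSpanSingleton_apply] using h1
  -- the scalar-valued morphism g0
  set g0 : ∀ p : P, M.V p →ₗ[k] k := fun p =>
    ξ ∘ₗ (M.colimRel (Set.univ : Set P)).mkQ ∘ₗ
      DFinsupp.lsingle (R := k) (M := fun p : (Set.univ : Set P) => M.V ↑p) (⟨p, Set.mem_univ p⟩ : (Set.univ : Set P)) with hg0def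
  have hmk : ∀ (p q : (Set.univ : Set P)) (h : (p : P) ≤ (q : P)) (x : M.V p),
      (Submodule.Quotient.mk (DFinsupp.lsingle (R := k) p x) :
        (Π₀ p : (Set.univ : Set P), M.V p) ⧸ M.colimRel (Set.univ : Set P)) =
      Submodule.Quotient.mk (DFinsupp.lsingle (R := k) q (M.φ p q h x)) := by
    intro p q h x
    rw [Submodule.Quotient.eq]
    exact Submodule.subset_span ⟨p, q, h, x, rfl⟩
  have hg0 : ∀ (p q : P) (h : p ≤ q) (x : M.V p), g0 q (M.φ p q h x) = g0 p x := by
    intro p q h x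
    simp only [hg0def, LinearMap.comp_apply, Submodule.mkQ_apply]
    rw [← hmk ⟨p, Set.mem_univ p⟩ ⟨q, Set.mem_univ q⟩ h x]
  -- g0 of the section is constantly ξ v = 1
  have hg0ℓ : ∀ p : P, g0 p (ℓ.1 ⟨p, Set.mem_univ p⟩) = 1 := by
    intro p
    simp only [hg0def, LinearMap.comp_apply, Submodule.mkQ_apply]
    have hzz := mk_lsingle_zigzag M (Set.univ : Set P) ℓ.1 ℓ.2 (hconn.2 p (Set.mem_univ p) p0 (Set.mem_univ p0))
      (Set.mem_univ p) (Set.mem_univ p0)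
    rw [hzz]
    have : (Submodule.Quotient.mk (DFinsupp.lsingle (R := k) (⟨p0, Set.mem_univ p0⟩ : (Set.univ : Set P))
        (ℓ.1 ⟨p0, Set.mem_univ p0⟩)) : (Π₀ p : (Set.univ : Set P), M.V p) ⧸ M.colimRel (Set.univ : Set P)) = v := by
      rw [hv]
      rfl
    rw [this, hξv]
  -- the section-valued morphism f0
  set f0 : ∀ p : P, k →ₗ[k] M.V p := fun p =>
    LinearMap.toSpanSingleton k _ (ℓ.1 ⟨p, Set.mem_univ p⟩) with hf0def
  have hf0 : ∀ (p q : P) (h : p ≤ q) (c : k), M.φ p q h (f0 p c) = f0 q c := by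
    intro p q h c
    simp only [hf0def, LinearMap.toSpanSingleton_apply, map_smul]
    rw [ℓ.2 ⟨p, Set.mem_univ p⟩ ⟨q, Set.mem_univ q⟩ h]
  have hgf : ∀ (p : P) (c : k), g0 p (f0 p c) = c := by
    intro p c
    simp only [hf0def, LinearMap.toSpanSingleton_apply, map_smul, hg0ℓ p, smul_eq_mul, mul_one]
  -- the two components
  set Kg : ∀ p : P, M.V p →ₗ[k] (kMod (k := k) (Set.univ : Set P) univ_convex).V p := fun p =>
    LinearMap.codRestrict (kSub (k := k) (Set.univ : Set P) p) (g0 p) (fun x => mem_kSub_univ p (g0 p x))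
    with hKgdef
  have hKgval : ∀ (p : P) (x : M.V p), kval (Kg p x) = g0 p x := fun p x => rfl
  set Np : ∀ p : P, M.V p →ₗ[k] ↥(LinearMap.ker (g0 p)) := fun p =>
    LinearMap.codRestrict (LinearMap.ker (g0 p)) (LinearMap.id - (f0 p) ∘ₗ (g0 p))
      (fun x => by
        rw [LinearMap.mem_ker]
        simp [hgf]) with hNpdef
  have hNpval : ∀ (p : P) (x : M.V p), (Np p x).1 = x - f0 p (g0 p x) := fun p x => rfl
  -- they assemble into an isomorphism M ≃ K ⊕ ker
  set N2 : PersMod k P := kerMod M g0 hg0 with hN2def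
  have hiso : Nonempty (M.Iso (dSum (kMod (k := k) (Set.univ : Set P) univ_convex) N2)) := by
    refine ⟨⟨fun p => LinearEquiv.ofLinear
      (LinearMap.prod (Kg p) (Np p))
      (LinearMap.coprod ((f0 p) ∘ₗ (kSub (k := k) (Set.univ : Set P) p).subtype)
        (LinearMap.ker (g0 p)).subtype) ?_ ?_, ?_⟩⟩
    · -- F ∘ B = id
      apply LinearMap.ext
      rintro ⟨c, y⟩
      simp only [LinearMap.comp_apply, LinearMap.coprod_apply, LinearMap.prod_apply,
        LinearMap.id_coe, id_eq, Pi.prod, Submodule.subtype_apply]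
      have hyc : g0 p ((f0 p) (Subtype.val c) + y.1) = Subtype.val c := by
        rw [map_add, hgf]
        have : g0 p y.1 = 0 := y.2
        rw [this, add_zero]
      refine Prod.ext ?_ ?_
      · apply kval_inj
        exact hyc
      · apply Subtype.ext
        show (f0 p) (Subtype.val c) + y.1 - f0 p (g0 p ((f0 p) (Subtype.val c) + y.1)) = y.1
        rw [hyc]
        abel
    · -- B ∘ F = id
      apply LinearMap.ext
      intro x
      simp only [LinearMap.comp_apply, LinearMap.prod_apply, LinearMap.coprod_apply,
        LinearMap.id_coe, id_eq, Pi.prod, Submodule.subtype_apply]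
      show (f0 p) (Subtype.val (Kg p x)) + Subtype.val (Np p x) = x
      rw [hNpval]
      have h3 : (f0 p) (Subtype.val (Kg p x)) = f0 p (g0 p x) := rfl
      rw [h3]
      abel
    · -- naturality
      intro p q h x
      have h1 : kval (Kg q (M.φ p q h x)) =
          kval ((kMod (k := k) (Set.univ : Set P) univ_convex).φ p q h (Kg p x)) := by
        rw [hKgval, kMod_univ_φ_coe, hKgval, hg0]
      have h2 : (Np q (M.φ p q h x)).1 = (N2.φ p q h (Np p x)).1 := by
        rw [hNpval]
        show M.φ p q h x - f0 q (g0 q (M.φ p q h x)) = M.φ p q h (Np p x).1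
        rw [hNpval, map_sub, hg0, hf0 p q h]
      exact Prod.ext (kval_inj _ _ h1) (Subtype.ext h2)
  -- indecomposability
  rcases hind.2 _ _ hiso with htriv | htriv
  · exfalso
    have hsub : Subsingleton ((kMod (k := k) (Set.univ : Set P) univ_convex).V p0) := htriv p0
    have h01 : (⟨1, mem_kSub_univ p0 1⟩ : (kMod (k := k) (Set.univ : Set P) univ_convex).V p0) =
        ⟨0, mem_kSub_univ p0 0⟩ := hsub.allEq _ _
    have h02 := congrArg Subtype.val h01
    exact one_ne_zero h02
  · -- the kernel is trivial, so Kg is an isomorphism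
    have hker : ∀ (p : P) (x : M.V p), g0 p x = 0 → x = 0 := by
      intro p x hx
      have hsub : Subsingleton (N2.V p) := htriv p
      have h01 : (⟨x, by rwa [LinearMap.mem_ker]⟩ : N2.V p) =
          ⟨0, by simp⟩ := hsub.allEq _ _
      exact congrArg Subtype.val h01
    refine ⟨⟨fun p => LinearEquiv.ofLinear (Kg p)
      ((f0 p) ∘ₗ (kSub (k := k) (Set.univ : Set P) p).subtype) ?_ ?_, ?_⟩⟩
    · apply LinearMap.ext
      intro c
      apply kval_inj
      simp only [LinearMap.comp_apply, LinearMap.id_coe, id_eq, Submodule.subtype_apply]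
      rw [hKgval]
      show g0 p (f0 p (Subtype.val c)) = kval c
      rw [hgf]
      rfl
    · apply LinearMap.ext
      intro x
      simp only [LinearMap.comp_apply, LinearMap.id_coe, id_eq, Submodule.subtype_apply]
      have : g0 p (f0 p (g0 p x) - x) = 0 := by
        rw [map_sub, hgf, sub_self]
      have h0 := hker p _ this
      have h4 := sub_eq_zero.mp h0
      show (f0 p) (g0 p x) = x
      exact h4
    · intro p q h x
      apply kval_inj
      show kval (Kg q (M.φ p q h x)) =
        kval ((kMod (k := k) (Set.univ : Set P) univ_convex).φ p q h (Kg p x))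
      rw [hKgval, kMod_univ_φ_coe, hKgval, hg0]

end Core

end PersMod
namespace PersMod

set_option linter.unusedSectionVars false

section Fam

variable {ι : Type} (Mf : ι → PersMod k P)

noncomputable def famIncl (a : ι) : Hom (Mf a) (famSum Mf) where
  f p := DFinsupp.lsingle (R := k) (M := fun b => (Mf b).V p) a
  comm p q h v := by
    simp [famSum, DFinsupp.lsingle_apply, DFinsupp.mapRange.linearMap,
      DFinsupp.mapRange_single]
    exact (DFinsupp.mapRange_single (f := fun i (x : (Mf i).V p) => (Mf i).φ p q h x) (hf := fun i => map_zero _)).symm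

noncomputable def famProj (a : ι) : Hom (famSum Mf) (Mf a) where
  f p := DFinsupp.lapply (R := k) (M := fun b => (Mf b).V p) a
  comm p q h v := by
    simp [famSum, DFinsupp.lapply_apply, DFinsupp.mapRange.linearMap,
      DFinsupp.mapRange_apply]
    rfl

lemma colimMap_proj_incl (a : ι) (I : Set P)
    (z : (Π₀ p : I, (Mf a).V p) ⧸ (Mf a).colimRel I) :
    colimMap (famProj Mf a) I (colimMap (famIncl Mf a) I z) = z := by
  obtain ⟨x, rfl⟩ := Submodule.Quotient.mk_surjective _ z
  rw [colimMap_mk, colimMap_mk]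
  congr 1
  ext p
  simp only [cMapAux, famIncl, famProj, DFinsupp.mapRange.linearMap, LinearMap.coe_mk,
    AddHom.coe_mk, DFinsupp.mapRange_apply]
  show (DFinsupp.single a (x p) : Π₀ b : ι, (Mf b).V ↑p) a = x p
  exact DFinsupp.single_eq_same

lemma colimMap_proj_incl_ne (a b : ι) (hab : a ≠ b) (I : Set P)
    (z : (Π₀ p : I, (Mf a).V p) ⧸ (Mf a).colimRel I) :
    colimMap (famProj Mf b) I (colimMap (famIncl Mf a) I z) = 0 := by
  obtain ⟨x, rfl⟩ := Submodule.Quotient.mk_surjective _ z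
  rw [colimMap_mk, colimMap_mk]
  have h0 : cMapAux (famProj Mf b) I (cMapAux (famIncl Mf a) I x) = 0 := by
    ext p
    simp only [cMapAux, famIncl, famProj, DFinsupp.mapRange.linearMap, LinearMap.coe_mk,
      AddHom.coe_mk, DFinsupp.mapRange_apply, DFinsupp.coe_zero, Pi.zero_apply]
    show (DFinsupp.single a (x p) : Π₀ b : ι, (Mf b).V ↑p) b = 0
    exact DFinsupp.single_eq_of_ne hab.symm
  rw [h0, Submodule.Quotient.mk_zero]

variable {M N : PersMod k P}

lemma secMap_symm_cancel (e : Iso M N) (I : Set P) (m : M.sections I) :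
    secMap e.symm.toHom I (secMap e.toHom I m) = m := by
  apply Subtype.ext
  funext p
  rw [secMap_apply, secMap_apply]
  exact (e.e p).symm_apply_apply _

lemma secMap_cancel_symm (e : Iso M N) (I : Set P) (m : N.sections I) :
    secMap e.toHom I (secMap e.symm.toHom I m) = m := by
  apply Subtype.ext
  funext p
  rw [secMap_apply, secMap_apply]
  exact (e.e p).apply_symm_apply _

lemma psi_famSum_decomp (I : Set P) (p0 : P) (hp : p0 ∈ I) (ℓ : ((famSum Mf).sections I)) :
    (famSum Mf).limToColim I p0 hp ℓ =
      ∑ a ∈ (ℓ.1 ⟨p0, hp⟩).support,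
        colimMap (famIncl Mf a) I ((Mf a).limToColim I p0 hp (secMap (famProj Mf a) I ℓ)) := by
  classical
  set q0 : I := ⟨p0, hp⟩ with hq0
  set y : Π₀ b : ι, (Mf b).V p0 := ℓ.1 q0 with hy
  set L : (Π₀ b : ι, (Mf b).V p0) →ₗ[k] ((Π₀ p : I, (famSum Mf).V p) ⧸ (famSum Mf).colimRel I) :=
    ((famSum Mf).colimRel I).mkQ ∘ₗ
      DFinsupp.lsingle (R := k) (M := fun p : I => (famSum Mf).V ↑p) q0 with hL
  have hx : (∑ a ∈ y.support, DFinsupp.single a (y a)) = y :=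
    DFinsupp.sum_single
  have lhs : (famSum Mf).limToColim I p0 hp ℓ = L y := rfl
  rw [lhs]
  conv_lhs => rw [← hx]
  rw [map_sum]
  refine Finset.sum_congr rfl ?_
  intro a _ha
  have rhs : (Mf a).limToColim I p0 hp (secMap (famProj Mf a) I ℓ) =
      Submodule.Quotient.mk (DFinsupp.lsingle (R := k) (M := fun p : I => (Mf a).V ↑p) q0
        (y a)) := rfl
  rw [rhs, colimMap_mk, cMapAux_single]
  rfl

end Fam

/-- Linear independence of disjointly supported nonzero `DFinsupp.single`s. -/
lemma linearIndependent_dfinsupp_single {ι' : Type} {β : ι' → Type} [∀ i, AddCommGroup (β i)]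
    [∀ i, Module k (β i)] {s : Type} (f : s → ι') (hf : Function.Injective f)
    (v : ∀ a : s, β (f a)) (hv : ∀ a, v a ≠ 0) :
    LinearIndependent k (fun a : s => (DFinsupp.single (f a) (v a) : Π₀ i, β i)) := by
  classical
  rw [linearIndependent_iff']
  intro t g hsum a hat
  have h1 := congrArg (fun y => (DFinsupp.lapply (R := k) (M := β) (f a)) y) hsum
  simp only [map_sum, map_zero, map_smul] at h1
  rw [Finset.sum_eq_single a (fun b _hb hba => by
      simp only [DFinsupp.lapply_apply]
      rw [DFinsupp.single_eq_of_ne (fun hc => hba (hf hc).symm), smul_zero])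
    (fun ha => absurd hat ha)] at h1
  simp only [DFinsupp.lapply_apply, DFinsupp.single_eq_same] at h1
  rcases smul_eq_zero.mp h1 with hg | hv0
  · exact hg
  · exact absurd hv0 (hv a)

end PersMod

/-- Over a connected poset `P`, if `M` decomposes as a direct sum of indecomposables
`M ≅ ⊕_a M_a`, then the rank of the canonical limit-to-colimit map of `M` equals the
number of indices `a` with `M_a` isomorphic to the constant interval module `k_P`. -/
theorem rank_eq_number_of_constant_summands
    (hconn : IsConnectedPoset (Set.univ : Set P))
    (M : PersMod k P) (hfd : ∀ p : P, FiniteDimensional k (M.V p))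
    {ι : Type} (Mf : ι → PersMod k P) (hind : ∀ a : ι, (Mf a).Indecomposable)
    (hiso : Nonempty (M.Iso (PersMod.famSum Mf))) :
    ∀ p0 : P,
      M.rkAt Set.univ p0 (Set.mem_univ p0) =
        Nat.card {a : ι | Nonempty ((Mf a).Iso
          (kMod (k := k) (Set.univ : Set P) (by intro a b c _ _ _ _; trivial)))} := by
  intro p0
  classical
  obtain ⟨e⟩ := hiso
  have hp0 : p0 ∈ (Set.univ : Set P) := Set.mem_univ p0
  set K := kMod (k := k) (Set.univ : Set P) PersMod.univ_convex with hK
  set S : Set ι := {a : ι | Nonempty ((Mf a).Iso K)} with hS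
  set N := PersMod.famSum Mf with hN
  -- finite dimensionality of the direct sum at p0
  haveI := hfd p0
  haveI hfdN : FiniteDimensional k (Π₀ b : ι, (Mf b).V p0) :=
    (e.e p0).finiteDimensional
  -- a nonzero vector at p0 for every a ∈ S
  have hva : ∀ a : S, ∃ v : (Mf a).V p0, v ≠ 0 := by
    rintro ⟨a, ha⟩
    obtain ⟨ea⟩ := ha
    refine ⟨(ea.e p0).symm ⟨1, PersMod.mem_kSub_univ p0 1⟩, ?_⟩
    intro h0
    have h1 := congrArg (ea.e p0) h0
    erw [LinearEquiv.apply_symm_apply, map_zero] at h1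
    exact one_ne_zero (congrArg Subtype.val h1)
  -- S is finite
  haveI hSfin : Finite S := by
    have hli : LinearIndependent k (fun a : S => (DFinsupp.single (a : ι)
        (Classical.choose (hva a)) : Π₀ b : ι, (Mf b).V p0)) :=
      PersMod.linearIndependent_dfinsupp_single (fun a : S => (a : ι)) Subtype.coe_injective
        (fun a => Classical.choose (hva a)) (fun a => Classical.choose_spec (hva a))
    exact hli.finite
  haveI : Fintype S := Fintype.ofFinite S
  -- the isomorphisms, sections and colimit classes
  have ea : ∀ a : S, ((Mf a).Iso K) := fun a => Classical.choice a.2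
  set σ : ∀ a : S, ((Mf a).sections Set.univ) :=
    fun a => PersMod.secMap (ea a).symm.toHom Set.univ (PersMod.kConstSec 1) with hσ
  set x : ∀ a : S, ((Π₀ p : (Set.univ : Set P), (Mf a).V p) ⧸ (Mf a).colimRel Set.univ) :=
    fun a => (Mf a).limToColim Set.univ p0 hp0 (σ a) with hx
  set w : S → ((Π₀ p : (Set.univ : Set P), N.V p) ⧸ N.colimRel Set.univ) :=
    fun a => PersMod.colimMap (PersMod.famIncl Mf (a : ι)) Set.univ (x a) with hw
  -- x a is nonzero
  have hx_ne : ∀ a : S, x a ≠ 0 := by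
    intro a h0
    have h1 := congrArg (PersMod.colimMap (ea a).toHom Set.univ) h0
    rw [map_zero, PersMod.colimMap_limToColim, PersMod.secMap_cancel_symm] at h1
    exact PersMod.kMod_psi_one_ne p0 h1
  -- each w a is in the range of ψ
  have hw_in : ∀ a : S, w a ∈ LinearMap.range (N.limToColim Set.univ p0 hp0) :=
    fun a => ⟨PersMod.secMap (PersMod.famIncl Mf (a : ι)) Set.univ (σ a),
      (PersMod.colimMap_limToColim _ _ _ _ _).symm⟩
  -- the range of ψ is contained in the span of the w a
  have hsub : LinearMap.range (N.limToColim Set.univ p0 hp0) ≤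
      Submodule.span k (Set.range w) := by
    rintro z ⟨ℓ, rfl⟩
    rw [PersMod.psi_famSum_decomp Mf Set.univ p0 hp0 ℓ]
    apply Submodule.sum_mem
    intro a _
    by_cases haS : a ∈ S
    · set ℓa := PersMod.secMap (PersMod.famProj Mf a) Set.univ ℓ with hℓa
      set c := PersMod.kval
        ((PersMod.secMap (ea ⟨a, haS⟩).toHom Set.univ ℓa).1 ⟨p0, hp0⟩) with hc
      have hconst : PersMod.secMap (ea ⟨a, haS⟩).toHom Set.univ ℓa =
          c • PersMod.kConstSec 1 := PersMod.kMod_sec_eq_smul hconn _ p0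
      have hdecomp : ℓa = c • σ ⟨a, haS⟩ := by
        have h2 := congrArg (PersMod.secMap (ea ⟨a, haS⟩).symm.toHom Set.univ) hconst
        rw [PersMod.secMap_symm_cancel, map_smul] at h2
        exact h2
      rw [hdecomp, map_smul, map_smul]
      exact Submodule.smul_mem _ c (Submodule.subset_span ⟨⟨a, haS⟩, rfl⟩)
    · have h0 : (Mf a).limToColim Set.univ p0 hp0
          (PersMod.secMap (PersMod.famProj Mf a) Set.univ ℓ) = 0 := by
        by_contra hne
        exact haS (PersMod.iso_kMod_of_psi_ne_zero (Mf a) hconn (hind a) p0 _ hne)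
      rw [h0, map_zero]
      exact Submodule.zero_mem _
  -- the w a are linearly independent
  have hindep : LinearIndependent k w := by
    rw [linearIndependent_iff']
    intro t g hsum b hbt
    have h1 := congrArg (PersMod.colimMap (PersMod.famProj Mf (b : ι)) Set.univ) hsum
    simp only [map_sum, map_smul, map_zero] at h1
    rw [Finset.sum_eq_single b (fun i _hi hib => by
        rw [hw, PersMod.colimMap_proj_incl_ne Mf (i : ι) (b : ι)
          (fun hc => hib (Subtype.ext hc)) Set.univ (x i), smul_zero])
      (fun hb => absurd hbt hb)] at h1
    rw [hw, PersMod.colimMap_proj_incl Mf (b : ι) Set.univ (x b)] at h1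
    rcases smul_eq_zero.mp h1 with h | h
    · exact h
    · exact absurd h (hx_ne b)
  -- conclude
  have hrange : LinearMap.range (N.limToColim Set.univ p0 hp0) =
      Submodule.span k (Set.range w) := by
    apply le_antisymm hsub
    rw [Submodule.span_le]
    rintro z ⟨a, rfl⟩
    exact hw_in a
  rw [PersMod.rkAt_eq_of_iso e Set.univ p0 hp0]
  show Module.finrank k (LinearMap.range (N.limToColim Set.univ p0 hp0)) = Nat.card S
  rw [hrange, finrank_span_eq_card hindep, Nat.card_eq_fintype_card]
end
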